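/- For m < n, the recursive optimal transport quantity satisfies d_{mn} > 0. Combined with d_{nn} = 0 and symmetry, d_{mn} = 0 if and only if m = n. -/

import Mathlib

open Finset

/-- `kmPi α i n` is `π_i^n = α_i ∏_{k=i+1}^n (1 - α_k)` (empty product = 1). -/
noncomputable def kmPi (α : ℕ → ℝ) (i n : ℕ) : ℝ :=
  α i * ∏ k ∈ Finset.Icc (i + 1) n, (1 - α k)
/-- A feasible transport plan between the probability vectors `π^m` and `π^n`. -/
def IsPlan (α : ℕ → ℝ) (m n : ℕ) (z : ℕ → ℕ → ℝ) : Prop :=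
  (∀ i ≤ m, ∀ j ≤ n, 0 ≤ z i j) ∧
  (∀ i ≤ m, ∑ j ∈ Finset.range (n + 1), z i j = kmPi α i m) ∧
  (∀ j ≤ n, ∑ i ∈ Finset.range (m + 1), z i j = kmPi α j n)

/-- Transport cost `Σ_{i=0}^m Σ_{j=0}^n z_{ij} d_{i-1,j-1}`, where indices of `D` are
shifted by one: `D i j` stands for `d_{i-1,j-1}`. -/
noncomputable def planCost (D : ℕ → ℕ → ℝ) (m n : ℕ) (z : ℕ → ℕ → ℝ) : ℝ :=
  ∑ i ∈ Finset.range (m + 1), ∑ j ∈ Finset.range (n + 1), z i j * D i j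

/-- `D : ℕ → ℕ → ℝ` encodes the family `d_{mn}` for `m, n ∈ {-1,0,1,...}` with indices
shifted by one: `D (m+1) (n+1) = d_{m,n}`, `D 0 (k+1) = d_{-1,k}`, etc.  It is the
recursive optimal-transport family: boundary values `d_{-1,-1} = 0`,
`d_{-1,k} = d_{k,-1} = 1`, and `d_{mn}` is the minimum transport cost between
`π^m` and `π^n` (the minimum, i.e. attained greatest lower bound). -/
def IsKMDist (α : ℕ → ℝ) (D : ℕ → ℕ → ℝ) : Prop :=
  D 0 0 = 0 ∧ (∀ k : ℕ, D 0 (k + 1) = 1) ∧ (∀ k : ℕ, D (k + 1) 0 = 1) ∧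
  ∀ m n : ℕ,
    IsLeast {c : ℝ | ∃ z : ℕ → ℕ → ℝ, IsPlan α m n z ∧ c = planCost D m n z}
      (D (m + 1) (n + 1))


section Plans

variable {α : ℕ → ℝ} {m n : ℕ} {z : ℕ → ℕ → ℝ}

lemma kmPi_self (α : ℕ → ℝ) (n : ℕ) : kmPi α n n = α n := by
  rw [kmPi, Finset.Icc_eq_empty (by omega), Finset.prod_empty, mul_one]

lemma kmPi_nonneg (hα : ∀ k, α k ∈ Set.Icc (0 : ℝ) 1) (i n : ℕ) : 0 ≤ kmPi α i n :=
  mul_nonneg (hα i).1 <| Finset.prod_nonneg fun k _ => sub_nonneg.2 (hα k).2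

lemma IsPlan.transpose (hz : IsPlan α m n z) : IsPlan α n m (fun j i => z i j) :=
  ⟨fun j hj i hi => hz.1 i hi j hj, hz.2.2, hz.2.1⟩

lemma planCost_transpose {D : ℕ → ℕ → ℝ} (hD : ∀ i ≤ m, ∀ j ≤ n, D i j = D j i) :
    planCost D n m (fun j i => z i j) = planCost D m n z := by
  rw [planCost, planCost, Finset.sum_comm]
  refine Finset.sum_congr rfl fun i hi => Finset.sum_congr rfl fun j hj => ?_
  rw [hD i (Finset.mem_range_succ_iff.1 hi) j (Finset.mem_range_succ_iff.1 hj)]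

lemma planCost_nonneg {D : ℕ → ℕ → ℝ} (hz : IsPlan α m n z)
    (hD : ∀ i ≤ m, ∀ j ≤ n, 0 ≤ D i j) : 0 ≤ planCost D m n z := by
  refine Finset.sum_nonneg fun i hi => Finset.sum_nonneg fun j hj => ?_
  rw [Finset.mem_range_succ_iff] at hi hj
  exact mul_nonneg (hz.1 i hi j hj) (hD i hi j hj)

lemma planCost_pos {D : ℕ → ℕ → ℝ} (hz : IsPlan α m n z)
    (hD : ∀ i ≤ m, ∀ j ≤ n, 0 ≤ D i j) {j : ℕ} (hj : j ≤ n) (hπ : 0 < kmPi α j n)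
    (hDj : ∀ i ≤ m, 0 < D i j) : 0 < planCost D m n z := by
  have hmass : ∑ i ∈ Finset.range (m + 1), (0 : ℝ) < ∑ i ∈ Finset.range (m + 1), z i j := by
    rwa [Finset.sum_const_zero, hz.2.2 j hj]
  obtain ⟨i, hi, hzij⟩ := Finset.exists_lt_of_sum_lt hmass
  have hi' := Finset.mem_range_succ_iff.1 hi
  refine Finset.sum_pos' (fun i' hi' => ?_) ⟨i, hi, ?_⟩
  · rw [Finset.mem_range_succ_iff] at hi'
    refine Finset.sum_nonneg fun j' hj' => ?_
    rw [Finset.mem_range_succ_iff] at hj'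
    exact mul_nonneg (hz.1 i' hi' j' hj') (hD i' hi' j' hj')
  · refine Finset.sum_pos' (fun j' hj' => ?_) ⟨j, Finset.mem_range_succ_iff.2 hj, ?_⟩
    · rw [Finset.mem_range_succ_iff] at hj'
      exact mul_nonneg (hz.1 i hi' j' hj') (hD i hi' j' hj')
    · exact mul_pos hzij (hDj i hi')

noncomputable def diagPlan (α : ℕ → ℝ) (n : ℕ) (i j : ℕ) : ℝ :=
  if i = j then kmPi α i n else 0

lemma isPlan_diagPlan (hα : ∀ k, α k ∈ Set.Icc (0 : ℝ) 1) (n : ℕ) :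
    IsPlan α n n (diagPlan α n) := by
  refine ⟨fun i _ j _ => ?_, fun i hi => ?_, fun j hj => ?_⟩
  · unfold diagPlan
    split_ifs
    exacts [kmPi_nonneg hα i n, le_rfl]
  · simp [diagPlan, Finset.sum_ite_eq, Nat.lt_succ_of_le hi]
  · simp [diagPlan, Finset.sum_ite_eq', Nat.lt_succ_of_le hj]

lemma planCost_diagPlan (D : ℕ → ℕ → ℝ) (α : ℕ → ℝ) (n : ℕ) :
    planCost D n n (diagPlan α n) = ∑ i ∈ Finset.range (n + 1), kmPi α i n * D i i := by
  refine Finset.sum_congr rfl fun i hi => ?_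
  simp [diagPlan, ite_mul, Finset.sum_ite_eq, hi]

end Plans

namespace IsKMDist

variable {α : ℕ → ℝ} {D : ℕ → ℕ → ℝ}

lemma exists_isPlan_eq (hD : IsKMDist α D) (m n : ℕ) :
    ∃ z, IsPlan α m n z ∧ D (m + 1) (n + 1) = planCost D m n z :=
  (hD.2.2.2 m n).1

lemma le_planCost (hD : IsKMDist α D) {m n : ℕ} {z : ℕ → ℕ → ℝ} (hz : IsPlan α m n z) :
    D (m + 1) (n + 1) ≤ planCost D m n z :=
  (hD.2.2.2 m n).2 ⟨z, hz, rfl⟩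

lemma nonneg (hD : IsKMDist α D) (m n : ℕ) : 0 ≤ D m n := by
  induction h : m + n using Nat.strong_induction_on generalizing m n with
  | _ s ih =>
    match m, n with
    | 0, 0 => exact hD.1.ge
    | 0, k + 1 => rw [hD.2.1]; exact zero_le_one
    | k + 1, 0 => rw [hD.2.2.1]; exact zero_le_one
    | a + 1, b + 1 =>
      obtain ⟨z, hz, hcost⟩ := hD.exists_isPlan_eq a b
      exact hcost ▸ planCost_nonneg hz fun i hi j hj => ih (i + j) (by omega) i j rfl

/-- Transposing an optimal plan for `(m, n)` gives a plan for `(n, m)` of the same cost,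
once the costs of the smaller pairs are known to be symmetric. -/
lemma symm (hD : IsKMDist α D) (m n : ℕ) : D m n = D n m := by
  induction h : m + n using Nat.strong_induction_on generalizing m n with
  | _ s ih =>
    match m, n with
    | 0, 0 => rfl
    | 0, k + 1 => rw [hD.2.1, hD.2.2.1]
    | k + 1, 0 => rw [hD.2.1, hD.2.2.1]
    | a + 1, b + 1 =>
      have hsmall : ∀ p q, p + q = a + b → ∀ i ≤ p, ∀ j ≤ q, D i j = D j i :=
        fun p q hpq i _ j _ => ih (i + j) (by omega) i j rfl
      have hle : ∀ p q, p + q = a + b → D (p + 1) (q + 1) ≤ D (q + 1) (p + 1) := by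
        intro p q hpq
        obtain ⟨z, hz, hcost⟩ := hD.exists_isPlan_eq q p
        rw [hcost, ← planCost_transpose (hsmall q p (by omega))]
        exact hD.le_planCost hz.transpose
      exact le_antisymm (hle a b rfl) (hle b a (by omega))

lemma diag_eq_zero (hD : IsKMDist α D) (hα : ∀ k, α k ∈ Set.Icc (0 : ℝ) 1) (n : ℕ) :
    D n n = 0 := by
  induction n using Nat.strong_induction_on with
  | _ n ih =>
    match n with
    | 0 => exact hD.1
    | k + 1 =>
      refine le_antisymm ?_ (hD.nonneg _ _)
      calc D (k + 1) (k + 1) ≤ planCost D k k (diagPlan α k) :=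
            hD.le_planCost (isPlan_diagPlan hα k)
        _ = 0 := by
          rw [planCost_diagPlan]
          refine Finset.sum_eq_zero fun i hi => ?_
          rw [ih i (by simpa using hi), mul_zero]

/-- For `m < n`, every `d_{i-1,n-1}` with `i ≤ m` is positive by induction, and any plan
must move the mass `α_n > 0` into column `n`. -/
lemma pos_of_lt (hD : IsKMDist α D) (hα : ∀ k, 0 < k → 0 < α k) {m n : ℕ} (hmn : m < n) :
    0 < D m n := by
  induction m using Nat.strong_induction_on generalizing n with
  | _ m ih =>
    obtain ⟨b, rfl⟩ : ∃ b, n = b + 1 := ⟨n - 1, by omega⟩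
    match m with
    | 0 => rw [hD.2.1]; exact zero_lt_one
    | a + 1 =>
      obtain ⟨z, hz, hcost⟩ := hD.exists_isPlan_eq a b
      rw [hcost]
      refine planCost_pos hz (fun i _ j _ => hD.nonneg i j) le_rfl ?_
        fun i hi => ih i (by omega) (by omega)
      rw [kmPi_self]
      exact hα b (by omega)

end IsKMDist

/-- for `m < n` (in `ℕ`) one has `d_{mn} > 0`; combined with
`d_{nn} = 0` and symmetry, `d_{mn} = 0 ↔ m = n` on `{-1,0,1,...}` (shifted). -/
theorem km_dist_pos (α : ℕ → ℝ) (hα0 : α 0 = 1)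
    (hα : ∀ n, 1 ≤ n → α n ∈ Set.Ioo (0 : ℝ) 1)
    (D : ℕ → ℕ → ℝ) (hD : IsKMDist α D) :
    (∀ m n : ℕ, m < n → 0 < D (m + 1) (n + 1)) ∧
    (∀ m n : ℕ, D m n = 0 ↔ m = n) := by
  have hαpos : ∀ k, 0 < k → 0 < α k := fun k hk => (hα k hk).1
  have hαIcc : ∀ k, α k ∈ Set.Icc (0 : ℝ) 1 := fun k => by
    rcases Nat.eq_zero_or_pos k with rfl | hk
    · simp [hα0]
    · exact Set.Ioo_subset_Icc_self (hα k hk)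
  refine ⟨fun m n hmn => hD.pos_of_lt hαpos (by omega), fun m n => ⟨fun h => ?_, ?_⟩⟩
  · rcases lt_trichotomy m n with hlt | heq | hgt
    · exact absurd h (hD.pos_of_lt hαpos hlt).ne'
    · exact heq
    · exact absurd (hD.symm m n ▸ h) (hD.pos_of_lt hαpos hgt).ne'
  · rintro rfl
    exact hD.diag_eq_zero hαIcc m
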